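/- The matrix exponential restricted to real symmetric n×n matrices is a bijection onto the set of real symmetric positive definite n×n matrices: every symmetric positive definite matrix has a unique symmetric matrix logarithm. -/

import Mathlib

/-!
By the continuous functional calculus, `exp a = cfc Real.exp a` for self-adjoint `a`, and
`CFC.log = cfc Real.log` inverts it: `log ∘ exp` is the identity on self-adjoint elements, and
`exp ∘ log` is the identity on strictly positive ones, since `Real.exp ∘ Real.log` is the identity
on their (positive) spectrum. For real matrices, self-adjoint means symmetric and strictly
positive means positive definite.
-/

open NormedSpace CFC

theorem IsSelfAdjoint.isStrictlyPositive_exp {A : Type*} [NormedRing A] [StarRing A]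
    [NormedAlgebra ℝ A] [PartialOrder A] [StarOrderedRing A]
    [ContinuousFunctionalCalculus ℝ A IsSelfAdjoint] [NonnegSpectrumClass ℝ A] {a : A}
    (ha : IsSelfAdjoint a) : IsStrictlyPositive (NormedSpace.exp a) := by
  rw [← real_exp_eq_normedSpace_exp, cfc_isStrictlyPositive_iff Real.exp a]
  exact fun x _ => Real.exp_pos x

theorem NormedSpace.exp_bijOn_isSelfAdjoint_isStrictlyPositive {A : Type*} [NormedRing A]
    [StarRing A] [NormedAlgebra ℝ A] [PartialOrder A] [StarOrderedRing A]
    [ContinuousFunctionalCalculus ℝ A IsSelfAdjoint] [NonnegSpectrumClass ℝ A] :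
    Set.BijOn exp {a : A | IsSelfAdjoint a} {a : A | IsStrictlyPositive a} :=
  ⟨fun _ ha => ha.isStrictlyPositive_exp,
    fun a ha b hb hab => by rw [← log_exp a ha, hab, log_exp b hb],
    fun a ha => ⟨log a, IsSelfAdjoint.log, exp_log a ha⟩⟩

open Matrix

theorem exp_bijOn_symmetric_posDef (n : ℕ) :
    Set.BijOn NormedSpace.exp
      {A : Matrix (Fin n) (Fin n) ℝ | Aᵀ = A}
      {M : Matrix (Fin n) (Fin n) ℝ | M.PosDef} := by
  -- Any norm inducing the product topology would do; `exp` depends only on the topology.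
  open scoped Matrix.Norms.L2Operator MatrixOrder in
  convert exp_bijOn_isSelfAdjoint_isStrictlyPositive (A := Matrix (Fin n) (Fin n) ℝ) using 1
  · ext A
    simp [IsSelfAdjoint, star_eq_conjTranspose]
  · ext M
    exact (isStrictlyPositive_iff_posDef (n := Fin n)).symm
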